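/- arXiv:1906.12107 — 2 statements merged into one kernel-verified Lean document; each statement's English description precedes it below -/
import Mathlib

section
/- Let α ∈ Δ and let D_λ be a conformal derivation of CL(b,φ) which is homogeneous of degree α, i.e. for every β ∈ Δ one has D_λ(x_β) = f_β(λ,∂) x_{α+β} for some f_β(λ,∂) ∈ ℂ[λ,∂]. Then D_λ is inner: there exists g(∂) ∈ ℂ[∂] such that D_λ = ad(g(∂)x_α)_λ, i.e. f_β(λ,∂) = g(−λ)·((α+b)∂ + (α+β+2b)λ + B(α,β)) for all β ∈ Δ (after absorbing G(λ) := g(−λ), equivalently: there exists G ∈ ℂ[λ] with f_β(λ,∂) = G(λ)((α+b)∂ + (α+β+2b)λ + B(α,β)) for all β ∈ Δ). -/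
/-- Evaluation of a two-variable polynomial `P(λ,∂) ∈ ℂ[λ,∂]` at `λ = l`, `∂ = d`. -/
noncomputable def ev2 (P : MvPolynomial (Fin 2) ℂ) (l d : ℂ) : ℂ :=
  MvPolynomial.eval ![l, d] P

/-- `B(α,β) = (1/b)(φ(α)β − φ(β)α + b(φ(α) − φ(β)))`. -/
noncomputable def Bc (b : ℂ) {Δ : AddSubgroup ℂ} (φ : Δ →+ ℂ) (α β : Δ) : ℂ :=
  (1 / b) * (φ α * (β : ℂ) - φ β * (α : ℂ) + b * (φ α - φ β))

/-!
Taking `γ = 0` and `μ = -λ - ∂` in the derivation identity, the two terms containing `f_β`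
combine to `(bλ + φ(α)) f_β(λ,∂) = f_0(λ,-λ) · ((α+b)∂ + (α+β+2b)λ + B(α,β))`.
At the root of `bλ + φ(α)` the right-hand side vanishes for every `∂`, and since `α + b ≠ 0`
this forces `f_0(λ,-λ)` to vanish there. Hence `f_0(λ,-λ) = (bλ + φ(α)) G(λ)` for a polynomial
`G`, and cancelling the linear factor gives `f_β = G · ((α+b)∂ + (α+β+2b)λ + B(α,β))`.
-/

open Polynomial

theorem Polynomial.exists_eval_eq_mul_of_isRoot {K : Type*} [Field K] {a c x₀ : K} (ha : a ≠ 0)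
    (hx₀ : a * x₀ + c = 0) {p : K[X]} (hp : p.IsRoot x₀) :
    ∃ q : K[X], ∀ x, p.eval x = (a * x + c) * q.eval x := by
  obtain ⟨q, rfl⟩ := dvd_iff_isRoot.mpr hp
  refine ⟨C a⁻¹ * q, fun x => ?_⟩
  simp only [eval_mul, eval_sub, eval_X, eval_C]
  rw [show c = -(a * x₀) by linear_combination hx₀]
  field_simp
  ring

theorem eq_of_linear_mul_eq {𝕜 : Type*} [NontriviallyNormedField 𝕜] {a c : 𝕜} (ha : a ≠ 0)
    {f g : 𝕜 → 𝕜} (hf : Continuous f) (hg : Continuous g)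
    (h : ∀ x, (a * x + c) * f x = (a * x + c) * g x) : f = g := by
  refine hf.ext_on (dense_compl_singleton (-c / a)) hg fun x hx => ?_
  have hx : a * x + c ≠ 0 := fun h0 =>
    hx (Set.mem_singleton_iff.mpr ((eq_div_iff ha).mpr (by linear_combination h0)))
  exact mul_left_cancel₀ hx (h x)

theorem eval_aeval_eq_ev2 (P : MvPolynomial (Fin 2) ℂ) (u v : ℂ[X]) (l : ℂ) :
    (MvPolynomial.aeval ![u, v] P).eval l = ev2 P (u.eval l) (v.eval l) := by
  have hcomp : (fun i => aeval l (![u, v] i)) = ![u.eval l, v.eval l] := by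
    funext i; fin_cases i <;> simp
  rw [← coe_aeval_eq_eval, MvPolynomial.comp_aeval_apply, hcomp]
  rfl

theorem continuous_ev2_left (P : MvPolynomial (Fin 2) ℂ) (d : ℂ) :
    Continuous fun l => ev2 P l d :=
  (MvPolynomial.continuous_eval P).comp (by fun_prop : Continuous fun l : ℂ => ![l, d])

-- The coefficient of `x_{α+β}` in `[x_α λ x_β]`, at `λ = l`, `∂ = d`.
noncomputable def bracketCoeff (b : ℂ) {Δ : AddSubgroup ℂ} (φ : Δ →+ ℂ) (α β : Δ) (l d : ℂ) : ℂ :=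
  ((α : ℂ) + b) * d + ((α : ℂ) + (β : ℂ) + 2 * b) * l + Bc b φ α β

-- The `x_{α+β+γ}`-component of `D_λ[x_β μ x_γ] = [(D_λ x_β) λ+μ x_γ] + [x_β μ (D_λ x_γ)]`
-- for `D_λ x_β = f_β(λ,∂) x_{α+β}`, evaluated at `λ = l`, `μ = m`, `∂ = d`.
def IsHomogeneousDerivation (b : ℂ) {Δ : AddSubgroup ℂ} (φ : Δ →+ ℂ) (α : Δ)
    (f : Δ → MvPolynomial (Fin 2) ℂ) : Prop :=
  ∀ β γ : Δ, ∀ l m d : ℂ,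
    (((β : ℂ) + b) * (d + l) + ((β : ℂ) + (γ : ℂ) + 2 * b) * m + Bc b φ β γ)
        * ev2 (f (β + γ)) l d
      = ev2 (f β) l (-l - m)
          * (((α : ℂ) + (β : ℂ) + b) * d
              + ((α : ℂ) + (β : ℂ) + (γ : ℂ) + 2 * b) * (l + m)
              + Bc b φ (α + β) γ)
        + ev2 (f γ) l (m + d)
          * (((β : ℂ) + b) * d + ((α : ℂ) + (β : ℂ) + (γ : ℂ) + 2 * b) * m
              + Bc b φ β (α + γ))

section

variable {Δ : AddSubgroup ℂ} {b : ℂ} {φ : Δ →+ ℂ}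

theorem Bc_zero_right (hb : b ≠ 0) (β : Δ) : Bc b φ β 0 = φ β := by
  simp only [Bc, map_zero, ZeroMemClass.coe_zero]
  field_simp
  ring

theorem Bc_swap (α β : Δ) : Bc b φ β α = -Bc b φ α β := by
  simp only [Bc]
  ring

namespace IsHomogeneousDerivation

variable {α : Δ} {f : Δ → MvPolynomial (Fin 2) ℂ}

theorem linear_mul_ev2_eq (hD : IsHomogeneousDerivation b φ α f) (hb : b ≠ 0) (β : Δ) (l d : ℂ) :
    (b * l + φ α) * ev2 (f β) l d = ev2 (f 0) l (-l) * bracketCoeff b φ α β l d := by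
  have h := hD β 0 l (-l - d) d
  rw [show -l - (-l - d) = d by ring, show -l - d + d = -l by ring, add_zero, add_zero,
    Bc_zero_right hb, Bc_zero_right hb, Bc_swap, map_add, ZeroMemClass.coe_zero] at h
  rw [bracketCoeff]
  linear_combination -h

theorem ev2_zero_eq_zero (hD : IsHomogeneousDerivation b φ α f) (hb : b ≠ 0)
    (hαb : (α : ℂ) + b ≠ 0) {l : ℂ} (hl : b * l + φ α = 0) : ev2 (f 0) l (-l) = 0 := by
  have h0 := hD.linear_mul_ev2_eq hb 0 l 0
  have h1 := hD.linear_mul_ev2_eq hb 0 l 1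
  rw [hl, zero_mul] at h0 h1
  by_contra hne
  have h := mul_left_cancel₀ hne (h1.symm.trans h0)
  rw [bracketCoeff, bracketCoeff] at h
  exact hαb (by linear_combination h)

end IsHomogeneousDerivation

end

theorem stmt7_general (Δ : AddSubgroup ℂ)
    (b : ℂ) (hb : 2 * b ∉ Δ) (φ : Δ →+ ℂ)
    (α : Δ) (f : Δ → MvPolynomial (Fin 2) ℂ)
    (hder : ∀ β γ : Δ, ∀ l m d : ℂ,
      (((β : ℂ) + b) * (d + l) + ((β : ℂ) + (γ : ℂ) + 2 * b) * m + Bc b φ β γ)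
          * ev2 (f (β + γ)) l d
        = ev2 (f β) l (-l - m)
            * (((α : ℂ) + (β : ℂ) + b) * d
                + ((α : ℂ) + (β : ℂ) + (γ : ℂ) + 2 * b) * (l + m)
                + Bc b φ (α + β) γ)
          + ev2 (f γ) l (m + d)
            * (((β : ℂ) + b) * d + ((α : ℂ) + (β : ℂ) + (γ : ℂ) + 2 * b) * m
                + Bc b φ β (α + γ))) :
    ∃ G : Polynomial ℂ, ∀ β : Δ, ∀ l d : ℂ,
      ev2 (f β) l d
        = G.eval l * (((α : ℂ) + b) * d + ((α : ℂ) + (β : ℂ) + 2 * b) * l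
            + Bc b φ α β) := by
  have hD : IsHomogeneousDerivation b φ α f := hder
  have hb0 : b ≠ 0 := fun h => hb (by rw [h, mul_zero]; exact Δ.zero_mem)
  have hαb : (α : ℂ) + b ≠ 0 := fun h => hb (by
    rw [show 2 * b = -((α : ℂ) + α) by linear_combination 2 * h]
    exact Δ.neg_mem (Δ.add_mem α.2 α.2))
  have hroot : b * (-φ α / b) + φ α = 0 := by field_simp; ring
  set H : ℂ[X] := MvPolynomial.aeval ![X, -X] (f 0)
  have hH : ∀ l, H.eval l = ev2 (f 0) l (-l) := fun l => by simp [H, eval_aeval_eq_ev2]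
  obtain ⟨G, hG⟩ := exists_eval_eq_mul_of_isRoot hb0 hroot (p := H)
    (by rw [IsRoot, hH]; exact hD.ev2_zero_eq_zero hb0 hαb hroot)
  refine ⟨G, fun β l d => ?_⟩
  show ev2 (f β) l d = G.eval l * bracketCoeff b φ α β l d
  refine congrFun (eq_of_linear_mul_eq hb0 (c := φ α) (f := fun l => ev2 (f β) l d)
    (g := fun l => G.eval l * bracketCoeff b φ α β l d)
    (continuous_ev2_left (f β) d) (by unfold bracketCoeff; fun_prop) fun l => ?_) l
  rw [hD.linear_mul_ev2_eq hb0, ← hH, hG]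
  ring

/-- Let `D_λ` be a conformal derivation of `CL(b,φ)` homogeneous of
degree `α`, i.e. `D_λ(x_β) = f_β(λ,∂)x_{α+β}` with `f_β ∈ ℂ[λ,∂]`.  The derivation
identity `D_λ[x_β μ x_γ] = [(D_λ x_β) λ+μ x_γ] + [x_β μ (D_λ x_γ)]`, written out on the
`x_{α+β+γ}`-component using `[x_α λ x_β] = ((α+b)∂ + (α+β+2b)λ + B(α,β))x_{α+β}`,
`D_λ(∂u) = (∂+λ)D_λu` and `[(p(∂)u) λ v] = p(−λ)[u λ v]`, is the hypothesis `hder`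
(an identity of polynomials in `λ, μ, ∂`, stated via evaluation at all `l, m, d ∈ ℂ`).
Then `D_λ` is inner: there is `G ∈ ℂ[λ]` (namely `G(λ) = g(−λ)` for
`D = ad(g(∂)x_α)_λ`) with `f_β(λ,∂) = G(λ)((α+b)∂ + (α+β+2b)λ + B(α,β))` for all `β`. -/
theorem stmt7 (Δ : AddSubgroup ℂ) (hΔinf : (Δ : Set ℂ).Infinite)
    (b : ℂ) (hb : 2 * b ∉ Δ) (φ : Δ →+ ℂ)
    (α : Δ) (f : Δ → MvPolynomial (Fin 2) ℂ)
    (hder : ∀ β γ : Δ, ∀ l m d : ℂ,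
      (((β : ℂ) + b) * (d + l) + ((β : ℂ) + (γ : ℂ) + 2 * b) * m + Bc b φ β γ)
          * ev2 (f (β + γ)) l d
        = ev2 (f β) l (-l - m)
            * (((α : ℂ) + (β : ℂ) + b) * d
                + ((α : ℂ) + (β : ℂ) + (γ : ℂ) + 2 * b) * (l + m)
                + Bc b φ (α + β) γ)
          + ev2 (f γ) l (m + d)
            * (((β : ℂ) + b) * d + ((α : ℂ) + (β : ℂ) + (γ : ℂ) + 2 * b) * m
                + Bc b φ β (α + γ))) :
    ∃ G : Polynomial ℂ, ∀ β : Δ, ∀ l d : ℂ,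
      ev2 (f β) l d
        = G.eval l * (((α : ℂ) + b) * d + ((α : ℂ) + (β : ℂ) + 2 * b) * l
            + Bc b φ α β) :=
  stmt7_general Δ b hb φ α f hder
end

section
/- Suppose f_{α,γ}(λ,∂) ∈ ℂ[λ,∂] (α, γ ∈ Δ) satisfies the intermediate-series equation, every f_{α,γ} is nonzero, and q_γ, m_γ ∈ ℂ are the constants with f_{0,γ}(λ,∂) = b(∂ + q_γλ + m_γ). Then m_{β+γ} = m_γ − φ(β)/b for all β, γ ∈ Δ; consequently, with c := m_0, one has m_β = c − φ(β)/b for all β ∈ Δ. -/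
/-- The intermediate-series equation for a family `f_{α,γ}(λ,∂) ∈ ℂ[λ,∂]`:
`((β+b)λ − (α+b)μ + B(α,β)) f_{α+β,γ}(λ+μ,∂)
  = f_{β,γ}(μ,λ+∂) f_{α,β+γ}(λ,∂) − f_{α,γ}(λ,μ+∂) f_{β,α+γ}(μ,∂)`
for all `α, β, γ ∈ Δ` (an identity in `ℂ[λ,μ,∂]`, stated via evaluation at all complex
points `l, m, d`).  Equivalently, `V = ⊕_{γ∈Δ} ℂ[∂]M_γ` with
`x_α λ M_γ = f_{α,γ}(λ,∂) M_{α+γ}` is a free intermediate series module over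
`CL(b,φ)`. -/
def ISE (Δ : AddSubgroup ℂ) (b : ℂ) (φ : Δ →+ ℂ)
    (f : Δ → Δ → MvPolynomial (Fin 2) ℂ) : Prop :=
  ∀ α β γ : Δ, ∀ l m d : ℂ,
    (((β : ℂ) + b) * l - ((α : ℂ) + b) * m + Bc b φ α β)
        * ev2 (f (α + β) γ) (l + m) d
      = ev2 (f β γ) m (l + d) * ev2 (f α (β + γ)) l d
        - ev2 (f α γ) l (m + d) * ev2 (f β (α + γ)) m d

theorem Bc_zero_left {b : ℂ} (hb : b ≠ 0) {Δ : AddSubgroup ℂ} (φ : Δ →+ ℂ) (β : Δ) :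
    Bc b φ 0 β = -φ β := by
  simp only [Bc, map_zero, ZeroMemClass.coe_zero]
  field_simp
  ring

theorem exists_ev2_ne_zero {P : MvPolynomial (Fin 2) ℂ} (hP : P ≠ 0) :
    ∃ l d : ℂ, ev2 P l d ≠ 0 := by
  by_contra! h
  refine hP (MvPolynomial.funext fun x => ?_)
  have hx : ![x 0, x 1] = x := by
    ext i
    fin_cases i <;> rfl
  simpa [ev2, hx] using h (x 0) (x 1)

namespace ISE

variable {Δ : AddSubgroup ℂ} {b : ℂ} {φ : Δ →+ ℂ} {f : Δ → Δ → MvPolynomial (Fin 2) ℂ}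
  {q m : Δ → ℂ}

theorem mul_ev2_eq_zero (hf : ISE Δ b φ f) (hb : b ≠ 0)
    (h0 : ∀ γ : Δ, ∀ l d : ℂ, ev2 (f 0 γ) l d = b * (d + q γ * l + m γ)) (β γ : Δ) (l d : ℂ) :
    (b * m (β + γ) - b * m γ + φ β) * ev2 (f β γ) l d = 0 := by
  have h := hf 0 β γ 0 l d
  simp only [Bc_zero_left hb, zero_add, ZeroMemClass.coe_zero, h0] at h
  linear_combination -h

theorem m_add (hf : ISE Δ b φ f) (hb : b ≠ 0) (hnz : ∀ α γ : Δ, f α γ ≠ 0)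
    (h0 : ∀ γ : Δ, ∀ l d : ℂ, ev2 (f 0 γ) l d = b * (d + q γ * l + m γ)) (β γ : Δ) :
    m (β + γ) = m γ - φ β / b := by
  obtain ⟨l, d, hne⟩ := exists_ev2_ne_zero (hnz β γ)
  have key := (mul_eq_zero.mp (hf.mul_ev2_eq_zero hb h0 β γ l d)).resolve_right hne
  field_simp
  linear_combination key

end ISE

theorem stmt12_general (Δ : AddSubgroup ℂ)
    (b : ℂ) (hb : 2 * b ∉ Δ) (φ : Δ →+ ℂ)
    (f : Δ → Δ → MvPolynomial (Fin 2) ℂ) (hf : ISE Δ b φ f)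
    (hnz : ∀ α γ : Δ, f α γ ≠ 0)
    (q m : Δ → ℂ)
    (h0 : ∀ γ : Δ, ∀ l d : ℂ, ev2 (f 0 γ) l d = b * (d + q γ * l + m γ)) :
    (∀ β γ : Δ, m (β + γ) = m γ - φ β / b) ∧
    (∀ β : Δ, m β = m 0 - φ β / b) := by
  have hb0 : b ≠ 0 := by
    rintro rfl
    exact hb (by simp)
  have hm := hf.m_add hb0 hnz h0
  exact ⟨hm, fun β => by simpa only [add_zero] using hm β 0⟩

/-- With all members nonzero and `f_{0,γ}(λ,∂) = b(∂ + q_γλ + m_γ)`,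
one has `m_{β+γ} = m_γ − φ(β)/b` for all `β, γ`, hence `m_β = m_0 − φ(β)/b`. -/
theorem stmt12 (Δ : AddSubgroup ℂ) (hΔinf : (Δ : Set ℂ).Infinite)
    (b : ℂ) (hb : 2 * b ∉ Δ) (φ : Δ →+ ℂ)
    (f : Δ → Δ → MvPolynomial (Fin 2) ℂ) (hf : ISE Δ b φ f)
    (hnz : ∀ α γ : Δ, f α γ ≠ 0)
    (q m : Δ → ℂ)
    (h0 : ∀ γ : Δ, ∀ l d : ℂ, ev2 (f 0 γ) l d = b * (d + q γ * l + m γ)) :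
    (∀ β γ : Δ, m (β + γ) = m γ - φ β / b) ∧
    (∀ β : Δ, m β = m 0 - φ β / b) :=
  stmt12_general Δ b hb φ f hf hnz q m h0
end
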